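/- Let Ω = (0,2) × (−1,2)^{n−1} ⊂ ℝⁿ and let u(x) = v(x₁) where v : (0,2) → [0,∞) is continuous. Then for α > 1 and every x ∈ (0,1)ⁿ, the local fractional maximal function over cubes satisfies M̃_{α,Ω}u(x) = (1/2) x₁^{α−1} ∫_0^{2x₁} v(t) dt. -/

import Mathlib

open MeasureTheory Metric

/-- The open axis-parallel cube with center `x` and side length `2r`. -/
def cube {n : ℕ} (x : EuclideanSpace ℝ (Fin n)) (r : ℝ) :
    Set (EuclideanSpace ℝ (Fin n)) :=
  {y | ∀ i, |y i - x i| < r}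

/-- The local fractional maximal function over cubes `M̃_{α,Ω} u`. -/
noncomputable def cubeFracMax {n : ℕ} (α : ℝ) (Ω : Set (EuclideanSpace ℝ (Fin n)))
    (u : EuclideanSpace ℝ (Fin n) → ℝ) (x : EuclideanSpace ℝ (Fin n)) : ℝ :=
  sSup {w : ℝ | ∃ r : ℝ, 0 < r ∧ cube x r ⊆ Ω ∧
    w = r ^ α * ⨍ y in cube x r, |u y|}

lemma cube_eq_preimage {n : ℕ} (x : EuclideanSpace ℝ (Fin n)) (r : ℝ) :
    cube x r = (MeasurableEquiv.toLp 2 (Fin n → ℝ)).symm ⁻¹'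
      (Set.univ.pi fun i => Set.Ioo (x i - r) (x i + r)) := by
  ext y
  simp only [cube, Set.mem_setOf_eq, Set.mem_preimage, Set.mem_univ_pi, Set.mem_Ioo,
    abs_sub_lt_iff]
  refine forall_congr' fun i => ?_
  have : (MeasurableEquiv.toLp 2 (Fin n → ℝ)).symm y i = y i := rfl
  rw [this]
  constructor <;> intro h <;> constructor <;> linarith [h.1, h.2]

lemma volume_cube {n : ℕ} (x : EuclideanSpace ℝ (Fin n)) {r : ℝ} (hr : 0 < r) :
    volume (cube x r) = ENNReal.ofReal ((2*r)^n) := by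
  rw [cube_eq_preimage,
    (EuclideanSpace.volume_preserving_symm_measurableEquiv_toLp (Fin n)).measure_preimage
      ((MeasurableSet.univ_pi fun i => measurableSet_Ioo).nullMeasurableSet),
    volume_pi_pi]
  have h : ∀ i : Fin n, volume (Set.Ioo (x i - r) (x i + r)) = ENNReal.ofReal (2*r) := by
    intro i
    rw [Real.volume_Ioo]
    congr 1
    ring
  simp only [h, Finset.prod_const, Finset.card_univ, Fintype.card_fin]
  rw [← ENNReal.ofReal_pow (by linarith)]

lemma integral_cube {n : ℕ} (x : EuclideanSpace ℝ (Fin n)) {r : ℝ} (hr : 0 < r)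
    (i0 : Fin n) (f : ℝ → ℝ) :
    ∫ y in cube x r, f (y i0) = (2*r)^(n-1) * ∫ t in Set.Ioo (x i0 - r) (x i0 + r), f t := by
  have key := (EuclideanSpace.volume_preserving_symm_measurableEquiv_toLp (Fin n)).setIntegral_preimage_emb
    (MeasurableEquiv.toLp 2 (Fin n → ℝ)).symm.measurableEmbedding
    (fun z : Fin n → ℝ => f (z i0)) (Set.univ.pi fun i => Set.Ioo (x i - r) (x i + r))
  rw [cube_eq_preimage]
  rw [show (∫ y in (MeasurableEquiv.toLp 2 (Fin n → ℝ)).symm ⁻¹'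
      (Set.univ.pi fun i => Set.Ioo (x i - r) (x i + r)), f (y i0))
      = ∫ z in (Set.univ.pi fun i => Set.Ioo (x i - r) (x i + r)), f (z i0) from key]
  set g : Fin n → ℝ → ℝ := fun i => if i = i0 then (Set.Ioo (x i0 - r) (x i0 + r)).indicator f
    else (Set.Ioo (x i - r) (x i + r)).indicator (fun _ => (1:ℝ)) with hg
  have hind : ∀ z : Fin n → ℝ,
      (Set.univ.pi fun i => Set.Ioo (x i - r) (x i + r)).indicator (fun z => f (z i0)) z
      = ∏ i, g i (z i) := by
    intro z
    by_cases hz : z ∈ Set.univ.pi fun i => Set.Ioo (x i - r) (x i + r)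
    · rw [Set.indicator_of_mem hz]
      rw [Finset.prod_eq_single i0]
      · simp only [hg, if_pos rfl]
        exact (Set.indicator_of_mem (hz i0 (Set.mem_univ _)) f).symm
      · intro i _ hi
        simp only [hg, if_neg hi]
        exact Set.indicator_of_mem (hz i (Set.mem_univ _)) _
      · simp
    · rw [Set.indicator_of_notMem hz]
      obtain ⟨j, hj⟩ : ∃ j, z j ∉ Set.Ioo (x j - r) (x j + r) := by
        by_contra h
        push_neg at h
        exact hz fun i _ => h i
      symm
      apply Finset.prod_eq_zero (Finset.mem_univ j)
      by_cases h : j = i0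
      · subst h
        simp only [hg, if_pos rfl]
        exact Set.indicator_of_notMem hj f
      · simp only [hg, if_neg h]
        exact Set.indicator_of_notMem hj _
  rw [← MeasureTheory.integral_indicator (MeasurableSet.univ_pi fun i => measurableSet_Ioo)]
  simp_rw [hind]
  rw [MeasureTheory.integral_fintype_prod_volume_eq_prod (ι := Fin n) g]
  rw [← Finset.mul_prod_erase Finset.univ _ (Finset.mem_univ i0)]
  have h1 : ∫ t, g i0 t = ∫ t in Set.Ioo (x i0 - r) (x i0 + r), f t := by
    simp only [hg, if_pos rfl]
    exact MeasureTheory.integral_indicator measurableSet_Ioo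
  have h2 : ∀ i ∈ Finset.univ.erase i0, (∫ t, g i t) = 2*r := by
    intro i hi
    have hi' := Finset.ne_of_mem_erase hi
    simp only [hg, if_neg hi']
    rw [MeasureTheory.integral_indicator_const (1:ℝ) measurableSet_Ioo, measureReal_def, Real.volume_Ioo,
      smul_eq_mul, mul_one, ENNReal.toReal_ofReal (by linarith)]
    ring
  rw [Finset.prod_congr rfl h2, Finset.prod_const,
    Finset.card_erase_of_mem (Finset.mem_univ i0), Finset.card_univ, Fintype.card_fin, h1,
    mul_comm]

lemma avg_cube {n : ℕ} (hn : 0 < n) (x : EuclideanSpace ℝ (Fin n)) {r : ℝ} (hr : 0 < r)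
    (i0 : Fin n) (α : ℝ) (f : ℝ → ℝ) :
    r ^ α * ⨍ y in cube x r, f (y i0)
      = (1/2) * r^(α-1) * ∫ t in Set.Ioo (x i0 - r) (x i0 + r), f t := by
  rw [setAverage_eq, measureReal_def, volume_cube x hr, integral_cube x hr i0 f,
    ENNReal.toReal_ofReal (by positivity), smul_eq_mul]
  rw [show ((2*r):ℝ)^n = (2*r)^(n-1) * (2*r) from by rw [← pow_succ]; congr 1; omega,
    Real.rpow_sub_one hr.ne' α]
  have h1 : (2*r) ≠ 0 := by linarith
  have h2 : ((2*r):ℝ)^(n-1) ≠ 0 := pow_ne_zero _ h1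
  field_simp

lemma cube_subset_iff {n : ℕ} (hn : 0 < n) (x : EuclideanSpace ℝ (Fin n)) {r : ℝ} (hr : 0 < r)
    (hx : ∀ i, x i ∈ Set.Ioo (0 : ℝ) 1) :
    cube x r ⊆ {y : EuclideanSpace ℝ (Fin n) |
          y ⟨0, hn⟩ ∈ Set.Ioo (0 : ℝ) 2 ∧
            ∀ i, i ≠ ⟨0, hn⟩ → y i ∈ Set.Ioo (-1 : ℝ) 2} ↔ r ≤ x ⟨0, hn⟩ := by
  set i0 : Fin n := ⟨0, hn⟩
  constructor
  · intro h
    by_contra hlt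
    push_neg at hlt
    have hyc : (show EuclideanSpace ℝ (Fin n) from
        WithLp.toLp 2 (fun j => if j = i0 then (x i0 - r)/2 else x j)) ∈ cube x r := by
      intro i
      show |(if i = i0 then (x i0 - r)/2 else x i) - x i| < r
      by_cases h' : i = i0
      · rw [if_pos h', h', abs_lt]
        have h1 := (hx i0).1
        constructor <;> linarith
      · rw [if_neg h']
        simpa using hr
    have h2 := (h hyc).1
    have h2' : ((x i0 - r)/2) ∈ Set.Ioo (0:ℝ) 2 := by simpa using h2
    linarith [h2'.1]
  · intro hr' y hy
    have h0 := hy i0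
    rw [abs_sub_lt_iff] at h0
    have hx0 := hx i0
    constructor
    · exact ⟨by linarith [h0.2, hx0.1], by linarith [h0.1, hx0.2]⟩
    · intro i hi
      have h1 := hy i
      rw [abs_sub_lt_iff] at h1
      have hxi := hx i
      exact ⟨by linarith [h1.2, hxi.1, hx0.2], by linarith [h1.1, hxi.2, hx0.2]⟩

theorem stmt12 {n : ℕ} (hn : 0 < n) (α : ℝ) (hα : 1 < α) (v : ℝ → ℝ)
    (hv : ContinuousOn v (Set.Ioo 0 2)) (hv0 : ∀ t ∈ Set.Ioo (0 : ℝ) 2, 0 ≤ v t)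
    (x : EuclideanSpace ℝ (Fin n))
    (hx : ∀ i, x i ∈ Set.Ioo (0 : ℝ) 1) :
    cubeFracMax α
        {y : EuclideanSpace ℝ (Fin n) |
          y ⟨0, hn⟩ ∈ Set.Ioo (0 : ℝ) 2 ∧
            ∀ i, i ≠ ⟨0, hn⟩ → y i ∈ Set.Ioo (-1 : ℝ) 2}
        (fun y => v (y ⟨0, hn⟩)) x =
      (1 / 2) * x ⟨0, hn⟩ ^ (α - 1) * ∫ t in Set.Ioo 0 (2 * x ⟨0, hn⟩), v t := by
  set i0 : Fin n := ⟨0, hn⟩ with hi0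
  set x0 := x i0 with hx0def
  have hx0 := hx i0
  set S : Set ℝ := {w : ℝ | ∃ r : ℝ, 0 < r ∧ r ≤ x0 ∧
    w = (1/2) * r^(α-1) * ∫ t in Set.Ioo (x0 - r) (x0 + r), |v t|} with hS
  have hLHS : cubeFracMax α
        {y : EuclideanSpace ℝ (Fin n) |
          y i0 ∈ Set.Ioo (0 : ℝ) 2 ∧
            ∀ i, i ≠ i0 → y i ∈ Set.Ioo (-1 : ℝ) 2}
        (fun y => v (y i0)) x = sSup S := by
    unfold cubeFracMax
    congr 1
    ext w
    simp only [hS, Set.mem_setOf_eq]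
    refine exists_congr fun r => ?_
    constructor
    · rintro ⟨hr, hsub, hw⟩
      refine ⟨hr, (cube_subset_iff hn x hr hx).mp hsub, ?_⟩
      have havg := avg_cube hn x hr i0 α (fun t => |v t|)
      simp only [] at havg
      rw [hw, havg]
    · rintro ⟨hr, hle, hw⟩
      refine ⟨hr, (cube_subset_iff hn x hr hx).mpr hle, ?_⟩
      have havg := avg_cube hn x hr i0 α (fun t => |v t|)
      simp only [] at havg
      rw [hw, havg]
  rw [hLHS]
  have hsub2 : Set.Ioo (0:ℝ) (2*x0) ⊆ Set.Ioo (0:ℝ) 2 :=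
    Set.Ioo_subset_Ioo le_rfl (by linarith [hx0.2])
  have hJ : ∫ t in Set.Ioo 0 (2*x0), v t = ∫ t in Set.Ioo 0 (2*x0), |v t| := by
    refine setIntegral_congr_fun measurableSet_Ioo fun t ht => ?_
    exact (abs_of_nonneg (hv0 t (hsub2 ht))).symm
  by_cases hint : IntegrableOn (fun t => |v t|) (Set.Ioo 0 (2*x0)) volume
  · -- integrable case
    have key : ∀ r : ℝ, 0 < r → r ≤ x0 →
        (1/2) * r^(α-1) * ∫ t in Set.Ioo (x0 - r) (x0 + r), |v t|
          ≤ (1/2) * x0^(α-1) * ∫ t in Set.Ioo 0 (2*x0), |v t| := by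
      intro r hr hle
      have hsub : Set.Ioo (x0 - r) (x0 + r) ⊆ Set.Ioo 0 (2*x0) :=
        Set.Ioo_subset_Ioo (by linarith) (by linarith)
      have hmono : (∫ t in Set.Ioo (x0 - r) (x0 + r), |v t|)
          ≤ ∫ t in Set.Ioo 0 (2*x0), |v t| :=
        setIntegral_mono_set hint (Filter.Eventually.of_forall fun t => abs_nonneg _)
          (HasSubset.Subset.eventuallyLE hsub)
      have hpow : r^(α-1) ≤ x0^(α-1) := Real.rpow_le_rpow hr.le hle (by linarith)
      have hJ1 : (0:ℝ) ≤ ∫ t in Set.Ioo (x0 - r) (x0 + r), |v t| :=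
        integral_nonneg fun t => abs_nonneg _
      have hx0pow : (0:ℝ) ≤ x0^(α-1) := Real.rpow_nonneg (by linarith [hx0.1]) _
      have := mul_le_mul hpow hmono hJ1 hx0pow
      rw [mul_assoc, mul_assoc]
      exact mul_le_mul_of_nonneg_left this (by norm_num)
    have hmem : ((1/2) * x0^(α-1) * ∫ t in Set.Ioo 0 (2*x0), |v t|) ∈ S := by
      refine ⟨x0, hx0.1, le_rfl, ?_⟩
      rw [show x0 - x0 = (0:ℝ) by ring, show x0 + x0 = 2*x0 by ring]
    have hbdd : BddAbove S :=
      ⟨(1/2) * x0^(α-1) * ∫ t in Set.Ioo 0 (2*x0), |v t|, by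
        rintro w ⟨r, hr, hle, rfl⟩
        exact key r hr hle⟩
    rw [hJ]
    apply le_antisymm
    · refine csSup_le (Set.nonempty_of_mem hmem) ?_
      rintro w ⟨r, hr, hle, rfl⟩
      exact key r hr hle
    · exact le_csSup hbdd hmem
  · -- non-integrable case
    have hvint : ¬ IntegrableOn v (Set.Ioo 0 (2*x0)) volume := fun h => hint h.abs
    rw [integral_undef hvint, mul_zero]
    have hx0pos : (0:ℝ) < x0 := hx0.1
    have hub : ¬ BddAbove S := by
      rintro ⟨M, hM⟩
      set c := (x0/2) ^ (α - 1) with hc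
      have hcpos : 0 < c := Real.rpow_pos_of_pos (by linarith) _
      set C := 2 * M / c with hC
      have hbound : ∀ k : ℕ, (∫ t in Set.Ioc (x0/((k:ℝ)+2)) (2*x0 - x0/((k:ℝ)+2)),
          ‖|v t|‖) ≤ C := by
        intro k
        have hk2 : (0:ℝ) < (k:ℝ)+2 := by positivity
        set r : ℝ := x0 - x0/((k:ℝ)+2) with hrdef
        have hdle : x0/((k:ℝ)+2) ≤ x0/2 := by
          rw [div_le_div_iff₀ hk2 two_pos]
          nlinarith [Nat.cast_nonneg (α := ℝ) k]
        have hdpos : 0 < x0/((k:ℝ)+2) := div_pos hx0pos hk2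
        have hrr : x0/2 ≤ r := by rw [hrdef]; linarith
        have hrpos : 0 < r := lt_of_lt_of_le (half_pos hx0pos) hrr
        have hrle : r ≤ x0 := by rw [hrdef]; linarith
        have hmemS : ((1/2) * r^(α-1) * ∫ t in Set.Ioo (x0 - r) (x0 + r), |v t|) ∈ S :=
          ⟨r, hrpos, hrle, rfl⟩
        have h1 := hM hmemS
        have hcle : c ≤ r^(α-1) := Real.rpow_le_rpow (by linarith) hrr (by linarith)
        have hJ1 : (0:ℝ) ≤ ∫ t in Set.Ioo (x0 - r) (x0 + r), |v t| :=
          integral_nonneg fun t => abs_nonneg _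
        have he1 : x0 - r = x0/((k:ℝ)+2) := by rw [hrdef]; ring
        have he2 : x0 + r = 2*x0 - x0/((k:ℝ)+2) := by rw [hrdef]; ring
        have hnorm : (∫ t in Set.Ioc (x0/((k:ℝ)+2)) (2*x0 - x0/((k:ℝ)+2)), ‖|v t|‖)
            = ∫ t in Set.Ioo (x0 - r) (x0 + r), |v t| := by
          rw [he1, he2, integral_Ioc_eq_integral_Ioo]
          simp [Real.norm_eq_abs, abs_abs]
        rw [hnorm, hC, le_div_iff₀ hcpos]
        nlinarith [mul_le_mul_of_nonneg_right hcle hJ1]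
      have hfi : ∀ k : ℕ, IntegrableOn (fun t => |v t|)
          (Set.Ioc (x0/((k:ℝ)+2)) (2*x0 - x0/((k:ℝ)+2))) volume := by
        intro k
        have hk2 : (0:ℝ) < (k:ℝ)+2 := by positivity
        have hsub3 : Set.Icc (x0/((k:ℝ)+2)) (2*x0 - x0/((k:ℝ)+2)) ⊆ Set.Ioo (0:ℝ) 2 := by
          intro t ht
          have h1 : 0 < x0/((k:ℝ)+2) := div_pos hx0pos hk2
          exact ⟨lt_of_lt_of_le h1 ht.1, lt_of_le_of_lt ht.2 (by linarith [hx0.2])⟩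
        have hcont : ContinuousOn (fun t => |v t|)
            (Set.Icc (x0/((k:ℝ)+2)) (2*x0 - x0/((k:ℝ)+2))) := (hv.mono hsub3).abs
        exact hcont.integrableOn_Icc.mono_set Set.Ioc_subset_Icc_self
      have ha : Filter.Tendsto (fun k : ℕ => x0/((k:ℝ)+2)) Filter.atTop (nhds 0) := by
        have h := (tendsto_const_div_atTop_nhds_zero_nat x0).comp
          (Filter.tendsto_add_atTop_nat 2)
        have heq : (fun k : ℕ => x0/((k:ℝ)+2))
            = (fun n : ℕ => x0 / (n:ℝ)) ∘ (fun n : ℕ => n + 2) := by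
          funext k
          simp only [Function.comp]
          norm_cast
        rw [heq]
        exact h
      have hb : Filter.Tendsto (fun k : ℕ => 2*x0 - x0/((k:ℝ)+2)) Filter.atTop
          (nhds (2*x0)) := by
        simpa using tendsto_const_nhds.sub ha
      have hintOn := integrableOn_Ioc_of_intervalIntegral_norm_bounded hfi ha hb
        (Filter.Eventually.of_forall hbound)
      exact hint (hintOn.mono_set Set.Ioo_subset_Ioc_self)
    rw [csSup_of_not_bddAbove hub, Real.sSup_empty]
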